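/- arXiv:1805.10243 — 7 statements merged into one kernel-verified Lean document; each statement's English description precedes it below -/
import Mathlib

section
/- Let T=(V,E) be a directed tree, let λ={λ_v}_{v∈V} be a sequence of positive real numbers, and let 1 ≤ p < ∞. The shift operator S on L^p(T,λ) is bounded if and only if sup_{u∈V} Σ_{v∈child(u)} λ_v/λ_u < ∞, and in that case its operator norm equals (sup_{u∈V} Σ_{v∈child(u)} λ_v/λ_u)^{1/p}. -/
open Filter

attribute [local instance] Classical.propDecidable
open scoped ENNReal

/-- A directed tree: a locally finite directed graph on a (countably infinite)
vertex set with no directed circuits, whose underlying undirected graph is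
connected, and in which every vertex has indegree at most one. -/
structure DirTree (V : Type) where
  E : V → V → Prop
  finIn : ∀ v : V, {u : V | E u v}.Finite
  finOut : ∀ v : V, {u : V | E v u}.Finite
  noCircuit : ∀ (n : ℕ) (c : Fin (n + 1) → V), Function.Injective c →
    (∀ i : Fin n, E (c i.castSucc) (c i.succ)) → ¬ E (c (Fin.last n)) (c 0)
  conn : (SimpleGraph.fromRel E).Connected
  indeg : ∀ ⦃u w v : V⦄, E u v → E w v → u = w

namespace DirTree

variable {V : Type} (T : DirTree V)

/-- A root is a vertex of indegree zero. -/
def IsRoot (r : V) : Prop := ∀ u : V, ¬ T.E u r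

/-- The set of children of a vertex. -/
def child (u : V) : Set V := {v : V | T.E u v}

/-- A leaf is a vertex of outdegree zero. -/
def IsLeaf (u : V) : Prop := ¬ (T.child u).Nonempty

/-- The (forward) shift `(S f)(v) = f (parent v)`, with `(S f)(root) = 0`. -/
noncomputable def shift (f : V → ℂ) (v : V) : ℂ :=
  if h : ∃ u : V, T.E u v then f h.choose else 0

/-- The backward shift `(B f)(u) = ∑_{v ∈ child u} f v`. -/
noncomputable def bwd (f : V → ℂ) (u : V) : ℂ :=
  ∑' v : T.child u, f v.1

/-- The operator `(S* g)(u) = ∑_{v ∈ child u} g v · λ_v / λ_u`. -/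
noncomputable def sstar (lam : V → ℝ) (g : V → ℂ) (u : V) : ℂ :=
  ∑' v : T.child u, g v.1 * ((lam v.1 / lam u : ℝ) : ℂ)

/-- `childN n u` is the set of vertices `v` with `parentⁿ v = u`. -/
def childN (T : DirTree V) : ℕ → V → Set V
  | 0, u => {u}
  | n + 1, u => {w : V | ∃ v ∈ T.child u, w ∈ childN T n v}

/-- `γ(u,n)`, the cardinality of `childN n u`. -/
noncomputable def gam (u : V) (n : ℕ) : ℕ := (T.childN n u).ncard

/-- The `n`-th ancestor `parentⁿ u` of `u` (junk value `u` if it does not exist). -/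
noncomputable def anc (u : V) (n : ℕ) : V :=
  if h : ∃ w : V, u ∈ T.childN n w then h.choose else u

/-- A leafless directed tree has a free end if some vertex is such that all of
its descendants have outdegree one. -/
def FreeEnd : Prop :=
  ∃ w : V, ∀ n : ℕ, 0 < n → ∀ v ∈ T.childN n w, (T.child v).ncard = 1

end DirTree

/-- Membership in the weighted space `L^p(T,λ)`. -/
def MemLp' {V : Type} (lam : V → ℝ) (p : ℝ) (f : V → ℂ) : Prop :=
  Summable (fun v => ‖f v‖ ^ p * lam v)

/-- The norm of the weighted space `L^p(T,λ)`. -/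
noncomputable def pNorm {V : Type} (lam : V → ℝ) (p : ℝ) (f : V → ℂ) : ℝ :=
  (∑' v, ‖f v‖ ^ p * lam v) ^ (1 / p)

/-- Boundedness of an operator on `L^p(T,λ)`. -/
def BoundedOn {V : Type} (lam : V → ℝ) (p : ℝ) (A : (V → ℂ) → (V → ℂ)) : Prop :=
  ∃ C : ℝ, 0 ≤ C ∧ ∀ f : V → ℂ, MemLp' lam p f →
    MemLp' lam p (A f) ∧ pNorm lam p (A f) ≤ C * pNorm lam p f

/-- Hypercyclicity of an operator on `L^p(T,λ)`: some `f ∈ L^p(T,λ)` has dense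
orbit `{Aⁿ f : n ∈ ℕ}`. -/
def Hypercyclic {V : Type} (lam : V → ℝ) (p : ℝ) (A : (V → ℂ) → (V → ℂ)) : Prop :=
  ∃ f : V → ℂ, MemLp' lam p f ∧ ∀ g : V → ℂ, MemLp' lam p g → ∀ ε : ℝ, 0 < ε →
    ∃ n : ℕ, MemLp' lam p (A^[n] f - g) ∧ pNorm lam p (A^[n] f - g) < ε

section Aux
variable {V : Type}

noncomputable def Np (lam : V → ℝ) (p : ℝ) (f : V → ℂ) : ℝ≥0∞ :=
  ∑' v, ENNReal.ofReal (‖f v‖ ^ p * lam v)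

lemma term_nonneg (lam : V → ℝ) (hlam : ∀ v, 0 < lam v) (p : ℝ) (f : V → ℂ) (v : V) :
    0 ≤ ‖f v‖ ^ p * lam v :=
  mul_nonneg (Real.rpow_nonneg (norm_nonneg _) _) (hlam v).le

lemma np_eq_ofReal (lam : V → ℝ) (hlam : ∀ v, 0 < lam v) (p : ℝ) (f : V → ℂ)
    (hf : MemLp' lam p f) :
    Np lam p f = ENNReal.ofReal (∑' v, ‖f v‖ ^ p * lam v) :=
  (ENNReal.ofReal_tsum_of_nonneg (term_nonneg lam hlam p f) hf).symm

lemma memLp'_iff (lam : V → ℝ) (hlam : ∀ v, 0 < lam v) (p : ℝ) (f : V → ℂ) :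
    MemLp' lam p f ↔ Np lam p f ≠ ⊤ := by
  constructor
  · intro hf
    rw [np_eq_ofReal lam hlam p f hf]
    exact ENNReal.ofReal_ne_top
  · intro h
    have := ENNReal.summable_toReal h
    refine this.congr fun v => ?_
    exact ENNReal.toReal_ofReal (term_nonneg lam hlam p f v)

lemma pNorm_eq (lam : V → ℝ) (hlam : ∀ v, 0 < lam v) (p : ℝ) (f : V → ℂ)
    (hf : MemLp' lam p f) :
    pNorm lam p f = (Np lam p f).toReal ^ (1 / p) := by
  rw [np_eq_ofReal lam hlam p f hf, ENNReal.toReal_ofReal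
    (tsum_nonneg (term_nonneg lam hlam p f))]
  rfl

/-- the weight `g u = ∑_{v ∈ child u} λ_v/λ_u` in `ℝ≥0∞`. -/
noncomputable def gw (T : DirTree V) (lam : V → ℝ) (u : V) : ℝ≥0∞ :=
  ∑' v : T.child u, ENNReal.ofReal (lam v.1 / lam u)

lemma key (T : DirTree V) (lam : V → ℝ) (hlam : ∀ v, 0 < lam v) (p : ℝ) (hp : 0 < p)
    (f : V → ℂ) :
    Np lam p (T.shift f)
      = ∑' u, ENNReal.ofReal (‖f u‖ ^ p * lam u) * gw T lam u := by
  classical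
  set F : V → ℝ≥0∞ := fun v => ENNReal.ofReal (‖T.shift f v‖ ^ p * lam v) with hF
  set s : Set V := {v | ∃ u : V, T.E u v} with hs
  have hsplit : ∑' v : V, F v = ∑' v : s, F v + ∑' v : (sᶜ : Set V), F v :=
    (Summable.tsum_add_tsum_compl (f := F) ENNReal.summable ENNReal.summable).symm
  have hcompl : ∑' v : (sᶜ : Set V), F v = 0 := by
    rw [ENNReal.tsum_eq_zero]
    rintro ⟨v, hv⟩
    have : T.shift f v = 0 := dif_neg hv
    simp [hF, this, Real.zero_rpow hp.ne']
  -- the equivalence Σ u, child u ≃ s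
  have hinj : Function.Injective
      (fun x : Σ u : V, T.child u => (⟨x.2.1, ⟨x.1, x.2.2⟩⟩ : s)) := by
    rintro ⟨u, v, hv⟩ ⟨u', v', hv'⟩ h
    have hvv : v = v' := congrArg Subtype.val h
    subst hvv
    have : u = u' := T.indeg hv hv'
    subst this
    rfl
  have hsurj : Function.Surjective
      (fun x : Σ u : V, T.child u => (⟨x.2.1, ⟨x.1, x.2.2⟩⟩ : s)) := by
    rintro ⟨v, u, hu⟩
    exact ⟨⟨u, v, hu⟩, rfl⟩
  let e : (Σ u : V, T.child u) ≃ s := Equiv.ofBijective _ ⟨hinj, hsurj⟩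
  have hes : ∑' x : Σ u : V, T.child u, F ((e x).1) = ∑' v : s, F v :=
    e.tsum_eq fun v : s => F v.1
  have hshift : ∀ (u : V) (v : T.child u), T.shift f v.1 = f u := by
    rintro u ⟨v, hv⟩
    have h : ∃ w : V, T.E w v := ⟨u, hv⟩
    have : T.shift f v = f h.choose := dif_pos h
    rw [this, T.indeg h.choose_spec hv]
  calc ∑' v : V, F v = ∑' v : s, F v := by rw [hsplit, hcompl, add_zero]
    _ = ∑' x : Σ u : V, T.child u, F ((e x).1) := hes.symm
    _ = ∑' (u : V) (v : T.child u), F v.1 := ENNReal.tsum_sigma' _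
    _ = ∑' u, ENNReal.ofReal (‖f u‖ ^ p * lam u) * gw T lam u := by
        refine tsum_congr fun u => ?_
        have : ∀ v : T.child u, F v.1
            = ENNReal.ofReal (‖f u‖ ^ p * lam u) * ENNReal.ofReal (lam v.1 / lam u) := by
          intro v
          rw [hF]
          simp only [hshift u v]
          rw [← ENNReal.ofReal_mul (term_nonneg lam hlam p f u)]
          congr 1
          rw [mul_assoc, mul_comm (lam u), div_mul_cancel₀ _ (hlam u).ne']
        rw [tsum_congr this, ENNReal.tsum_mul_left]
        rfl
end Aux


section Aux2
variable {V : Type}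

/-- delta function at `u`. -/
noncomputable def dl (u : V) : V → ℂ := fun w => if w = u then 1 else 0

lemma dl_term (lam : V → ℝ) (p : ℝ) (hp0 : 0 < p) (u v : V) :
    ‖dl u v‖ ^ p * lam v = if v = u then lam u else 0 := by
  by_cases h : v = u
  · simp [dl, h, Real.one_rpow]
  · simp [dl, h, Real.zero_rpow hp0.ne']

lemma dl_mem (lam : V → ℝ) (p : ℝ) (hp0 : 0 < p) (u : V) : MemLp' lam p (dl u) := by
  refine summable_of_ne_finset_zero (s := {u}) fun v hv => ?_
  rw [dl_term lam p hp0, if_neg (by simpa using hv)]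

lemma dl_tsum (lam : V → ℝ) (p : ℝ) (hp0 : 0 < p) (u : V) :
    ∑' v, ‖dl u v‖ ^ p * lam v = lam u := by
  rw [tsum_eq_single u fun v hv => by
    rw [dl_term lam p hp0, if_neg hv], dl_term lam p hp0, if_pos rfl]

lemma dl_pnorm (lam : V → ℝ) (p : ℝ) (hp0 : 0 < p) (u : V) :
    pNorm lam p (dl u) = lam u ^ (1 / p) := by
  rw [pNorm, dl_tsum lam p hp0]

lemma dl_np_shift (T : DirTree V) (lam : V → ℝ) (hlam : ∀ v, 0 < lam v) (p : ℝ)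
    (hp0 : 0 < p) (u : V) :
    Np lam p (T.shift (dl u)) = ENNReal.ofReal (lam u) * gw T lam u := by
  rw [key T lam hlam p hp0 (dl u),
    tsum_eq_single u fun w hw => by
      rw [dl_term lam p hp0, if_neg hw, ENNReal.ofReal_zero, zero_mul],
    dl_term lam p hp0, if_pos rfl]

lemma gw_le (T : DirTree V) (lam : V → ℝ) (hlam : ∀ v, 0 < lam v) (p : ℝ)
    (hp0 : 0 < p) (C : ℝ) (hC : 0 ≤ C) (u : V)
    (hmem : MemLp' lam p (T.shift (dl u)))
    (hineq : pNorm lam p (T.shift (dl u)) ≤ C * pNorm lam p (dl u)) :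
    gw T lam u ≤ ENNReal.ofReal (C ^ p) := by
  have hne : Np lam p (T.shift (dl u)) ≠ ⊤ := (memLp'_iff lam hlam p _).mp hmem
  rw [dl_np_shift T lam hlam p hp0 u] at hne
  have hgne : gw T lam u ≠ ⊤ := by
    intro h
    apply hne
    rw [h, ENNReal.mul_top (ENNReal.ofReal_pos.mpr (hlam u)).ne']
  have h1 : pNorm lam p (T.shift (dl u)) = (lam u * (gw T lam u).toReal) ^ (1 / p) := by
    rw [pNorm_eq lam hlam p _ hmem, dl_np_shift T lam hlam p hp0 u, ENNReal.toReal_mul,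
      ENNReal.toReal_ofReal (hlam u).le]
  have h2 : (lam u * (gw T lam u).toReal) ^ (1 / p) ≤ C * lam u ^ (1 / p) := by
    rw [← h1, ← dl_pnorm lam p hp0 u]
    exact hineq
  have ha : 0 ≤ lam u * (gw T lam u).toReal :=
    mul_nonneg (hlam u).le ENNReal.toReal_nonneg
  have h3 : lam u * (gw T lam u).toReal ≤ C ^ p * lam u := by
    have := Real.rpow_le_rpow (Real.rpow_nonneg ha _) h2 hp0.le
    rwa [one_div, Real.rpow_inv_rpow ha hp0.ne',
      Real.mul_rpow hC (Real.rpow_nonneg (hlam u).le _),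
      Real.rpow_inv_rpow (hlam u).le hp0.ne'] at this
  have h4 : (gw T lam u).toReal ≤ C ^ p := by
    rw [mul_comm] at h3
    exact le_of_mul_le_mul_right h3 (hlam u)
  calc gw T lam u = ENNReal.ofReal ((gw T lam u).toReal) := (ENNReal.ofReal_toReal hgne).symm
    _ ≤ ENNReal.ofReal (C ^ p) := ENNReal.ofReal_le_ofReal h4

lemma upper (T : DirTree V) (lam : V → ℝ) (hlam : ∀ v, 0 < lam v) (p : ℝ)
    (hp0 : 0 < p) (hM : (⨆ u, gw T lam u) ≠ ⊤) (f : V → ℂ) (hf : MemLp' lam p f) :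
    MemLp' lam p (T.shift f) ∧
      pNorm lam p (T.shift f) ≤ (⨆ u, gw T lam u).toReal ^ (1 / p) * pNorm lam p f := by
  set M := ⨆ u, gw T lam u with hMdef
  have hle : Np lam p (T.shift f) ≤ Np lam p f * M := by
    rw [key T lam hlam p hp0 f, Np, ← ENNReal.tsum_mul_right]
    exact ENNReal.tsum_le_tsum fun u => mul_le_mul_right (le_iSup _ u) _
  have hfne : Np lam p f ≠ ⊤ := (memLp'_iff lam hlam p f).mp hf
  have hmulne : Np lam p f * M ≠ ⊤ := ENNReal.mul_ne_top hfne hM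
  have hne : Np lam p (T.shift f) ≠ ⊤ := ne_top_of_le_ne_top hmulne hle
  have hmem : MemLp' lam p (T.shift f) := (memLp'_iff lam hlam p _).mpr hne
  refine ⟨hmem, ?_⟩
  rw [pNorm_eq lam hlam p _ hmem, pNorm_eq lam hlam p f hf]
  have ht : (Np lam p (T.shift f)).toReal ≤ (Np lam p f).toReal * M.toReal := by
    rw [← ENNReal.toReal_mul]
    exact ENNReal.toReal_mono hmulne hle
  calc (Np lam p (T.shift f)).toReal ^ (1 / p)
      ≤ ((Np lam p f).toReal * M.toReal) ^ (1 / p) :=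
        Real.rpow_le_rpow ENNReal.toReal_nonneg ht (by positivity)
    _ = M.toReal ^ (1 / p) * (Np lam p f).toReal ^ (1 / p) := by
        rw [Real.mul_rpow ENNReal.toReal_nonneg ENNReal.toReal_nonneg, mul_comm]
end Aux2

/-- The shift `S` on `L^p(T,λ)` is bounded iff
`sup_u ∑_{v ∈ child u} λ_v/λ_u < ∞`, in which case its operator norm equals
`(sup_u ∑_{v ∈ child u} λ_v/λ_u)^{1/p}`. -/
theorem stmt_0 {V : Type} [Countable V] [Infinite V] (T : DirTree V)
    (lam : V → ℝ) (hlam : ∀ v : V, 0 < lam v) (p : ℝ) (hp : 1 ≤ p) :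
    (BoundedOn lam p T.shift ↔
      (⨆ u : V, ∑' v : T.child u, ENNReal.ofReal (lam v.1 / lam u)) < ⊤) ∧
    (BoundedOn lam p T.shift →
      sInf {C : ℝ | 0 ≤ C ∧ ∀ f : V → ℂ, MemLp' lam p f →
          pNorm lam p (T.shift f) ≤ C * pNorm lam p f} =
        ((⨆ u : V, ∑' v : T.child u, ENNReal.ofReal (lam v.1 / lam u)).toReal) ^ (1 / p)) := by
  have hp0 : 0 < p := lt_of_lt_of_le one_pos hp
  have hMgw : (⨆ u : V, ∑' v : T.child u, ENNReal.ofReal (lam v.1 / lam u))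
      = ⨆ u, gw T lam u := rfl
  rw [hMgw]
  set M : ℝ≥0∞ := ⨆ u, gw T lam u with hMdef
  have fwd : BoundedOn lam p T.shift → M < ⊤ := by
    rintro ⟨C, hC0, hC⟩
    refine lt_of_le_of_lt (iSup_le fun u => ?_)
      (ENNReal.ofReal_lt_top (r := C ^ p))
    obtain ⟨hmem, hineq⟩ := hC (dl u) (dl_mem lam p hp0 u)
    exact gw_le T lam hlam p hp0 C hC0 u hmem hineq
  have bwd : M < ⊤ → BoundedOn lam p T.shift := by
    intro hM
    exact ⟨M.toReal ^ (1 / p), Real.rpow_nonneg ENNReal.toReal_nonneg _,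
      fun f hf => upper T lam hlam p hp0 hM.ne f hf⟩
  refine ⟨⟨fwd, bwd⟩, fun hB => ?_⟩
  have hM : M < ⊤ := fwd hB
  obtain ⟨C₀, hC₀0, hC₀⟩ := hB
  have hmemS : M.toReal ^ (1 / p) ∈ {C : ℝ | 0 ≤ C ∧ ∀ f : V → ℂ, MemLp' lam p f →
      pNorm lam p (T.shift f) ≤ C * pNorm lam p f} :=
    ⟨Real.rpow_nonneg ENNReal.toReal_nonneg _,
      fun f hf => (upper T lam hlam p hp0 hM.ne f hf).2⟩
  apply le_antisymm
  · exact csInf_le ⟨0, fun C hC => hC.1⟩ hmemS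
  · refine le_csInf ⟨_, hmemS⟩ fun C hC => ?_
    obtain ⟨hC0, hCineq⟩ := hC
    have hle : M ≤ ENNReal.ofReal (C ^ p) :=
      iSup_le fun u => gw_le T lam hlam p hp0 C hC0 u
        (hC₀ (dl u) (dl_mem lam p hp0 u)).1 (hCineq (dl u) (dl_mem lam p hp0 u))
    have htr : M.toReal ≤ C ^ p := by
      calc M.toReal ≤ (ENNReal.ofReal (C ^ p)).toReal :=
            ENNReal.toReal_mono ENNReal.ofReal_ne_top hle
        _ = C ^ p := ENNReal.toReal_ofReal (by positivity)
    calc M.toReal ^ (1 / p) ≤ (C ^ p) ^ (1 / p) :=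
          Real.rpow_le_rpow ENNReal.toReal_nonneg htr (by positivity)
      _ = C := by rw [one_div, Real.rpow_rpow_inv hC0 hp0.ne']
end

section
/- Let T=(V,E) be a directed tree with a root, let λ={λ_v}_{v∈V} be a sequence of positive real numbers, and let 1 ≤ p < ∞. If the shift operator S : L^p(T,λ) → L^p(T,λ) is bounded, then S is not hypercyclic. -/
open Filter

attribute [local instance] Classical.propDecidable
open scoped ENNReal

/-- If the directed tree has a root and the shift `S` is bounded
on `L^p(T,λ)`, then `S` is not hypercyclic. -/
theorem stmt_1 {V : Type} [Countable V] [Infinite V] (T : DirTree V)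
    (hroot : ∃ r : V, T.IsRoot r)
    (lam : V → ℝ) (hlam : ∀ v : V, 0 < lam v) (p : ℝ) (hp : 1 ≤ p)
    (hb : BoundedOn lam p T.shift) :
    ¬ Hypercyclic lam p T.shift := by
  rintro ⟨f, hf, hyp⟩
  obtain ⟨r, hr⟩ := hroot
  have hp0 : 0 < p := lt_of_lt_of_le one_pos hp
  set c : ℂ := ((‖f r‖ + 1 : ℝ) : ℂ) with hc
  have hcnorm : ‖c‖ = ‖f r‖ + 1 := by
    rw [hc, Complex.norm_real, Real.norm_eq_abs, abs_of_nonneg (by positivity)]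
  set g : V → ℂ := fun v => if v = r then c else 0 with hg
  have hgmem : MemLp' lam p g := by
    apply summable_of_ne_finset_zero (s := ({r} : Finset V))
    intro v hv
    simp only [Finset.mem_singleton] at hv
    simp [hg, hv, Real.zero_rpow (ne_of_gt hp0)]
  have hε : (0:ℝ) < lam r ^ (1/p) := Real.rpow_pos_of_pos (hlam r) _
  obtain ⟨n, hmem, hlt⟩ := hyp g hgmem _ hε
  have hshift_r : ∀ h : V → ℂ, T.shift h r = 0 := by
    intro h
    unfold DirTree.shift
    rw [dif_neg]
    push_neg
    exact hr
  have key : 1 ≤ ‖(T.shift^[n] f - g) r‖ := by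
    have hgr : g r = c := if_pos rfl
    cases n with
    | zero =>
      simp only [Function.iterate_zero, id, Pi.sub_apply, hgr]
      have h1 : ‖c‖ - ‖f r‖ ≤ ‖f r - c‖ := by
        have := norm_sub_norm_le (f r - c) (f r)
        simp at this
        linarith [norm_sub_rev (f r) c, norm_sub_norm_le c (f r),
          norm_sub_rev c (f r)]
      rw [hcnorm] at h1
      linarith
    | succ m =>
      have hz : T.shift^[m+1] f r = 0 := by
        rw [Function.iterate_succ_apply']
        exact hshift_r _
      simp only [Pi.sub_apply, hz, zero_sub, norm_neg, hgr, hcnorm]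
      linarith [norm_nonneg (f r)]
  have hpow : 1 ≤ ‖(T.shift^[n] f - g) r‖ ^ p := by
    have h1 := Real.rpow_le_rpow (by norm_num) key (le_of_lt hp0)
    rwa [Real.one_rpow] at h1
  have hterm : lam r ≤ ‖(T.shift^[n] f - g) r‖ ^ p * lam r := by
    nlinarith [hlam r]
  have hle : ‖(T.shift^[n] f - g) r‖ ^ p * lam r ≤
      ∑' v, ‖(T.shift^[n] f - g) v‖ ^ p * lam v := by
    apply Summable.le_tsum hmem r
    intro v _
    exact mul_nonneg (Real.rpow_nonneg (norm_nonneg _) _) (hlam v).le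
  have hfinal : lam r ^ (1/p) ≤ pNorm lam p (T.shift^[n] f - g) := by
    unfold pNorm
    calc lam r ^ (1/p)
        ≤ (‖(T.shift^[n] f - g) r‖ ^ p * lam r) ^ (1/p) :=
          Real.rpow_le_rpow (hlam r).le hterm (by positivity)
      _ ≤ (∑' v, ‖(T.shift^[n] f - g) v‖ ^ p * lam v) ^ (1/p) :=
          Real.rpow_le_rpow (mul_nonneg (Real.rpow_nonneg (norm_nonneg _) _)
            (hlam r).le) hle (by positivity)
  linarith
end

section
/- Let T=(V,E) be a directed tree, let λ={λ_v}_{v∈V} be a sequence of positive real numbers, and let 1 ≤ p < ∞. If T has at least one vertex of outdegree at least 2 and the shift operator S : L^p(T,λ) → L^p(T,λ) is bounded, then S is not hypercyclic. -/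
open Filter

attribute [local instance] Classical.propDecidable
open scoped ENNReal

lemma shift_apply_of_edge {V : Type} (T : DirTree V) (f : V → ℂ) {u v : V}
    (h : T.E u v) : T.shift f v = f u := by
  have hex : ∃ w : V, T.E w v := ⟨u, h⟩
  rw [DirTree.shift, dif_pos hex]
  exact congrArg f (T.indeg hex.choose_spec h)

lemma pNorm_ge {V : Type} (lam : V → ℝ) (hlam : ∀ v : V, 0 < lam v) (p : ℝ)
    (hp : 1 ≤ p) (F : V → ℂ) (hF : MemLp' lam p F) (v : V) :
    ‖F v‖ * lam v ^ (1/p) ≤ pNorm lam p F := by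
  have hp0 : (0:ℝ) < p := lt_of_lt_of_le one_pos hp
  have hterm : ∀ w, 0 ≤ ‖F w‖ ^ p * lam w := fun w =>
    mul_nonneg (Real.rpow_nonneg (norm_nonneg _) _) (hlam w).le
  have h1 : ‖F v‖ ^ p * lam v ≤ ∑' w, ‖F w‖ ^ p * lam w :=
    Summable.le_tsum hF v (fun w _ => hterm w)
  have h2 := Real.rpow_le_rpow (hterm v) h1 (by positivity : (0:ℝ) ≤ 1/p)
  have h3 : (‖F v‖ ^ p * lam v) ^ (1/p) = ‖F v‖ * lam v ^ (1/p) := by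
    rw [Real.mul_rpow (Real.rpow_nonneg (norm_nonneg _) _) (hlam v).le,
      ← Real.rpow_mul (norm_nonneg _), mul_one_div, div_self hp0.ne', Real.rpow_one]
  rw [pNorm]
  rw [h3] at h2
  exact h2

/-- If the directed tree has a vertex of outdegree at least two
and the shift `S` is bounded on `L^p(T,λ)`, then `S` is not hypercyclic. -/
theorem stmt_2 {V : Type} [Countable V] [Infinite V] (T : DirTree V)
    (hdeg : ∃ u : V, 2 ≤ (T.child u).ncard)
    (lam : V → ℝ) (hlam : ∀ v : V, 0 < lam v) (p : ℝ) (hp : 1 ≤ p)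
    (hb : BoundedOn lam p T.shift) :
    ¬ Hypercyclic lam p T.shift := by
  have hp0 : (0:ℝ) < p := lt_of_lt_of_le one_pos hp
  rintro ⟨f, hf, hdense⟩
  obtain ⟨u, hu⟩ := hdeg
  obtain ⟨v1, v2, hv1, hv2, hne⟩ :=
    (Set.one_lt_ncard_iff (T.finOut u)).mp (lt_of_lt_of_le one_lt_two hu)
  -- choose a with ‖a‖ = 2 and ‖f v1 - a‖ ≥ 1
  set a : ℂ := if 1 ≤ ‖f v1 - 2‖ then (2:ℂ) else 4 with ha_def
  have hna : 2 ≤ ‖a‖ := by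
    rw [ha_def]; split <;> norm_num
  have hfa : 1 ≤ ‖f v1 - a‖ := by
    rw [ha_def]; split
    · assumption
    · rename_i hlt
      push_neg at hlt
      have : (2:ℝ) ≤ ‖f v1 - 2‖ + ‖f v1 - 4‖ := by
        have := norm_sub_le_norm_sub_add_norm_sub (4:ℂ) (f v1) 2
        have h4 : ‖(4:ℂ) - 2‖ = 2 := by norm_num
        calc (2:ℝ) = ‖(4:ℂ) - 2‖ := h4.symm
          _ ≤ ‖(4:ℂ) - f v1‖ + ‖f v1 - 2‖ := norm_sub_le_norm_sub_add_norm_sub _ _ _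
          _ = ‖f v1 - 2‖ + ‖f v1 - 4‖ := by rw [norm_sub_rev (4:ℂ)]; ring
      linarith
  set g : V → ℂ := fun v => if v = v1 then a else 0 with hg_def
  have hgmem : MemLp' lam p g := by
    apply summable_of_ne_finset_zero (s := {v1})
    intro v hv
    simp only [Finset.mem_singleton] at hv
    have : g v = 0 := by simp [hg_def, hv]
    rw [this, norm_zero, Real.zero_rpow hp0.ne', zero_mul]
  set ε : ℝ := min (lam v1 ^ (1/p)) (lam v2 ^ (1/p)) with hε_def
  have hε : 0 < ε :=
    lt_min (Real.rpow_pos_of_pos (hlam v1) _) (Real.rpow_pos_of_pos (hlam v2) _)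
  obtain ⟨n, hmem, hlt⟩ := hdense g hgmem ε hε
  have hg1 : g v1 = a := by simp [hg_def]
  have hg2 : g v2 = 0 := by simp [hg_def, hne.symm]
  rcases n with _ | m
  · -- n = 0 : ‖f - g‖ ≥ ‖f v1 - a‖ λ1^{1/p} ≥ λ1^{1/p} ≥ ε
    have h1 := pNorm_ge lam hlam p hp _ hmem v1
    simp only [Function.iterate_zero, id_eq] at h1 hlt
    have hv : ‖(f - g) v1‖ = ‖f v1 - a‖ := by rw [Pi.sub_apply, hg1]
    rw [hv] at h1
    have : ε ≤ pNorm lam p (f - g) := by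
      calc ε ≤ lam v1 ^ (1/p) := min_le_left _ _
        _ = 1 * lam v1 ^ (1/p) := (one_mul _).symm
        _ ≤ ‖f v1 - a‖ * lam v1 ^ (1/p) := by
            apply mul_le_mul_of_nonneg_right hfa (Real.rpow_pos_of_pos (hlam v1) _).le
        _ ≤ pNorm lam p (f - g) := h1
    linarith
  · -- n = m+1 : the iterate takes equal values at v1 and v2
    set F := T.shift^[m+1] f with hF_def
    have heq : F v1 = F v2 := by
      rw [hF_def, Function.iterate_succ_apply',
        shift_apply_of_edge T _ hv1, shift_apply_of_edge T _ hv2]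
    have h1 := pNorm_ge lam hlam p hp _ hmem v1
    have h2 := pNorm_ge lam hlam p hp _ hmem v2
    rw [Pi.sub_apply, hg1] at h1
    rw [Pi.sub_apply, hg2, sub_zero, ← heq] at h2
    set c := F v1 with hc
    have hsum : (1:ℝ) ≤ ‖c - a‖ ∨ (1:ℝ) ≤ ‖c‖ := by
      by_contra hcon
      push_neg at hcon
      have : ‖a‖ ≤ ‖c - a‖ + ‖c‖ := by
        calc ‖a‖ = ‖c - (c - a)‖ := by ring_nf
          _ ≤ ‖c‖ + ‖c - a‖ := norm_sub_le _ _
          _ = ‖c - a‖ + ‖c‖ := by ring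
      linarith [hcon.1, hcon.2]
    rcases hsum with hc1 | hc2
    · have : ε ≤ pNorm lam p (T.shift^[m+1] f - g) := by
        calc ε ≤ lam v1 ^ (1/p) := min_le_left _ _
          _ ≤ ‖c - a‖ * lam v1 ^ (1/p) := by
              nlinarith [Real.rpow_pos_of_pos (hlam v1) (1/p)]
          _ ≤ _ := h1
      linarith
    · have : ε ≤ pNorm lam p (T.shift^[m+1] f - g) := by
        calc ε ≤ lam v2 ^ (1/p) := min_le_right _ _
          _ ≤ ‖c‖ * lam v2 ^ (1/p) := by
              nlinarith [Real.rpow_pos_of_pos (hlam v2) (1/p)]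
          _ ≤ _ := h2
      linarith
end

section
/- Let T=(V,E) be a directed tree, let λ={λ_v}_{v∈V} be a sequence of positive real numbers, let 1 < p < ∞, and let q = p/(p−1). Assume the shift S : L^p(T,λ) → L^p(T,λ) is bounded. Under the identification of the dual of L^p(T,λ) with L^q(T,λ) via the pairing ⟨f,g⟩ = Σ_{v∈V} f(v) g(v) λ_v, the adjoint S* : L^q(T,λ) → L^q(T,λ) is given by (S* g)(u) = Σ_{v∈child(u)} g(v) λ_v/λ_u for each g ∈ L^q(T,λ) and each u ∈ V. -/
open Filter

attribute [local instance] Classical.propDecidable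
open scoped ENNReal

/-!
Testing the boundedness of `S` on the point mass at `u` gives
`∑_{v ∈ child u} λ_v ≤ ‖S‖^p λ_u`. Weighted Hölder on the finite set `child u` then yields
`|S* g (u)|^q λ_u ≤ ‖S‖^q ∑_{v ∈ child u} |g v|^q λ_v`, and since the sets `child u` are
disjoint, summing over `u` shows `S* g ∈ L^q`. The duality identity is the absolutely
convergent (by Hölder) series `∑_v f(parent v) g(v) λ_v` regrouped by parents.
-/

lemma rpow_tsum_mul_le_of_finite {ι : Type*} [Finite ι] {q : ℝ} (hq : 1 ≤ q) {w a : ι → ℝ}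
    (hw : ∀ i, 0 ≤ w i) (ha : ∀ i, 0 ≤ a i) :
    (∑' i, a i * w i) ^ q ≤ (∑' i, w i) ^ (q - 1) * ∑' i, a i ^ q * w i := by
  cases nonempty_fintype ι
  simp only [tsum_fintype]
  have hW : 0 ≤ ∑ i, w i := Finset.sum_nonneg fun i _ => hw i
  have hB : 0 ≤ ∑ i, w i * a i ^ q :=
    Finset.sum_nonneg fun i _ => mul_nonneg (hw i) (Real.rpow_nonneg (ha i) q)
  have holder := Real.inner_le_weight_mul_Lp_of_nonneg Finset.univ hq w a hw ha
  simp only [mul_comm (a _), mul_comm (a _ ^ q)]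
  calc (∑ i, w i * a i) ^ q
      ≤ ((∑ i, w i) ^ (1 - q⁻¹) * (∑ i, w i * a i ^ q) ^ q⁻¹) ^ q :=
        Real.rpow_le_rpow (Finset.sum_nonneg fun i _ => mul_nonneg (hw i) (ha i)) holder
          (by linarith)
    _ = (∑ i, w i) ^ (q - 1) * ∑ i, w i * a i ^ q := by
        rw [Real.mul_rpow (by positivity) (by positivity), ← Real.rpow_mul hW,
          Real.rpow_inv_rpow hB (by linarith), sub_mul, inv_mul_cancel₀ (by linarith), one_mul]

lemma norm_mul_rpow_inv_rpow {p : ℝ} (hp : p ≠ 0) (z : ℂ) {l : ℝ} (hl : 0 ≤ l) :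
    (‖z‖ * l ^ p⁻¹) ^ p = ‖z‖ ^ p * l := by
  rw [Real.mul_rpow (norm_nonneg z) (Real.rpow_nonneg hl _), Real.rpow_inv_rpow hl hp]

lemma MemLp'.summable_mul {V : Type} {lam : V → ℝ} {p q : ℝ} (hpq : p.HolderConjugate q)
    (hlam : ∀ v, 0 ≤ lam v) {f g : V → ℂ} (hf : MemLp' lam p f) (hg : MemLp' lam q g) :
    Summable fun v => f v * g v * (lam v : ℂ) := by
  have holder := Real.summable_mul_of_Lp_Lq_of_nonneg hpq
    (f := fun v => ‖f v‖ * lam v ^ p⁻¹) (g := fun v => ‖g v‖ * lam v ^ q⁻¹)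
    (fun v => mul_nonneg (norm_nonneg _) (Real.rpow_nonneg (hlam v) _))
    (fun v => mul_nonneg (norm_nonneg _) (Real.rpow_nonneg (hlam v) _))
    (hf.congr fun v => (norm_mul_rpow_inv_rpow hpq.ne_zero _ (hlam v)).symm)
    (hg.congr fun v => (norm_mul_rpow_inv_rpow hpq.symm.ne_zero _ (hlam v)).symm)
  refine Summable.of_norm (holder.congr fun v => ?_)
  rw [mul_mul_mul_comm, ← Real.rpow_add' (hlam v) (by rw [hpq.inv_add_inv_eq_one]; norm_num),
    hpq.inv_add_inv_eq_one, Real.rpow_one, norm_mul, norm_mul, Complex.norm_real,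
    Real.norm_of_nonneg (hlam v)]

lemma memLp'_single {V : Type} {lam : V → ℝ} {p : ℝ} (hp : p ≠ 0) (u : V) (z : ℂ) :
    MemLp' lam p (Pi.single u z) :=
  summable_of_ne_finset_zero (s := {u}) fun v hv => by
    rw [Pi.single_eq_of_ne (Finset.notMem_singleton.mp hv), norm_zero, Real.zero_rpow hp,
      zero_mul]

namespace DirTree

variable {V : Type} (T : DirTree V)

lemma shift_of_E {u v : V} (h : T.E u v) (f : V → ℂ) : T.shift f v = f u := by
  have hex : ∃ w, T.E w v := ⟨u, h⟩
  rw [shift, dif_pos hex, T.indeg hex.choose_spec h]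

lemma shift_of_not_exists {v : V} (h : ¬ ∃ u, T.E u v) (f : V → ℂ) : T.shift f v = 0 := by
  rw [shift, dif_neg h]

lemma injective_sigma_child : Function.Injective fun x : Σ u : V, T.child u => (x.2 : V) := by
  rintro ⟨u, v, hv⟩ ⟨u', v', hv'⟩ (rfl : v = v')
  obtain rfl : u = u' := T.indeg hv hv'
  rfl

lemma summable_tsum_child {h : V → ℝ} (hh : Summable h) :
    Summable fun u => ∑' v : T.child u, h v :=
  (hh.comp_injective T.injective_sigma_child).sigma

lemma tsum_shift_mul {f φ : V → ℂ} (h : Summable fun v => T.shift f v * φ v) :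
    ∑' v, T.shift f v * φ v = ∑' u, f u * ∑' v : T.child u, φ v := by
  have hsupp : Function.support (fun v => T.shift f v * φ v) ⊆
      Set.range fun x : Σ u : V, T.child u => (x.2 : V) := by
    intro v hv
    by_contra hr
    refine hv (show T.shift f v * φ v = 0 from ?_)
    rw [T.shift_of_not_exists (fun ⟨u, hu⟩ => hr ⟨⟨u, v, hu⟩, rfl⟩), zero_mul]
  have hsigma : Summable fun x : Σ u : V, T.child u => f x.1 * φ x.2 :=
    (h.comp_injective T.injective_sigma_child).congr fun x => by
      simp only [Function.comp_apply, T.shift_of_E x.2.2]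
  calc ∑' v, T.shift f v * φ v = ∑' x : Σ u : V, T.child u, f x.1 * φ x.2 := by
        rw [← T.injective_sigma_child.tsum_eq hsupp]
        exact tsum_congr fun x => by rw [T.shift_of_E x.2.2]
    _ = ∑' u, ∑' v : T.child u, f u * φ v := hsigma.tsum_sigma
    _ = ∑' u, f u * ∑' v : T.child u, φ v := by simp only [tsum_mul_left]

lemma sstar_mul_of_ne_zero (lam : V → ℝ) (g : V → ℂ) {u : V} (hu : lam u ≠ 0) :
    T.sstar lam g u * lam u = ∑' v : T.child u, g v * lam v := by
  rw [sstar, ← tsum_mul_right]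
  refine tsum_congr fun v => ?_
  push_cast
  rw [mul_assoc, div_mul_cancel₀ _ (Complex.ofReal_ne_zero.mpr hu)]

lemma norm_shift_single_rpow_mul {p : ℝ} (hp : p ≠ 0) (lam : V → ℝ) (u v : V) :
    ‖T.shift (Pi.single u 1) v‖ ^ p * lam v = (T.child u).indicator lam v := by
  by_cases huv : T.E u v
  · rw [T.shift_of_E huv, Set.indicator_of_mem (show v ∈ T.child u from huv),
      Pi.single_eq_same, norm_one, Real.one_rpow, one_mul]
  · have hzero : T.shift (Pi.single u 1) v = 0 := by
      by_cases hv : ∃ w, T.E w v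
      · obtain ⟨w, hw⟩ := hv
        rw [T.shift_of_E hw, Pi.single_eq_of_ne fun hwu : w = u => huv (hwu ▸ hw)]
      · exact T.shift_of_not_exists hv _
    rw [Set.indicator_of_notMem (show v ∉ T.child u from huv), hzero, norm_zero,
      Real.zero_rpow hp, zero_mul]

lemma tsum_child_le_of_pNorm_shift_single_le {lam : V → ℝ} (hlam : ∀ v, 0 ≤ lam v) {p C : ℝ}
    (hp : 0 < p) (hC : 0 ≤ C) {u : V}
    (hS : pNorm lam p (T.shift (Pi.single u 1)) ≤ C * pNorm lam p (Pi.single u 1)) :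
    ∑' v : T.child u, lam v ≤ C ^ p * lam u := by
  have hshift : ∑' v, ‖T.shift (Pi.single u 1) v‖ ^ p * lam v = ∑' v : T.child u, lam v := by
    rw [tsum_subtype]
    exact tsum_congr (T.norm_shift_single_rpow_mul hp.ne' lam u)
  have hsingle : ∑' v, ‖(Pi.single u 1 : V → ℂ) v‖ ^ p * lam v = lam u := by
    rw [tsum_eq_single u fun v hv => by
      rw [Pi.single_eq_of_ne hv, norm_zero, Real.zero_rpow hp.ne', zero_mul]]
    rw [Pi.single_eq_same, norm_one, Real.one_rpow, one_mul]
  rw [pNorm, pNorm, hshift, hsingle, one_div] at hS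
  have hD : 0 ≤ ∑' v : T.child u, lam v := tsum_nonneg fun v => hlam v
  calc ∑' v : T.child u, lam v = ((∑' v : T.child u, lam v) ^ p⁻¹) ^ p :=
        (Real.rpow_inv_rpow hD hp.ne').symm
    _ ≤ (C * lam u ^ p⁻¹) ^ p := Real.rpow_le_rpow (Real.rpow_nonneg hD _) hS hp.le
    _ = C ^ p * lam u := by
        rw [Real.mul_rpow hC (Real.rpow_nonneg (hlam u) _), Real.rpow_inv_rpow (hlam u) hp.ne']

lemma norm_sstar_rpow_mul_le {lam : V → ℝ} (hlam : ∀ v, 0 < lam v) {q M : ℝ} (hq : 1 ≤ q)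
    (hM : 0 ≤ M) (g : V → ℂ) {u : V} (hu : ∑' v : T.child u, lam v ≤ M * lam u) :
    ‖T.sstar lam g u‖ ^ q * lam u ≤ M ^ (q - 1) * ∑' v : T.child u, ‖g v‖ ^ q * lam v := by
  have : Finite (T.child u) := (T.finOut u).to_subtype
  have hu0 : 0 < lam u := hlam u
  have hB : 0 ≤ ∑' v : T.child u, ‖g v‖ ^ q * lam v :=
    tsum_nonneg fun v => mul_nonneg (Real.rpow_nonneg (norm_nonneg _) _) (hlam v).le
  have hnorm : ‖T.sstar lam g u‖ * lam u ≤ ∑' v : T.child u, ‖g v‖ * lam v := by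
    have hreal : ∀ v, ‖(lam v : ℂ)‖ = lam v := fun v => by
      rw [Complex.norm_real, Real.norm_of_nonneg (hlam v).le]
    calc ‖T.sstar lam g u‖ * lam u = ‖∑' v : T.child u, g v * lam v‖ := by
          rw [← T.sstar_mul_of_ne_zero lam g hu0.ne', norm_mul, hreal]
      _ ≤ ∑' v : T.child u, ‖g v * lam v‖ := norm_tsum_le_tsum_norm Summable.of_finite
      _ = ∑' v : T.child u, ‖g v‖ * lam v := tsum_congr fun v => by rw [norm_mul, hreal]
  have hpow : (‖T.sstar lam g u‖ * lam u) ^ q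
      ≤ (M * lam u) ^ (q - 1) * ∑' v : T.child u, ‖g v‖ ^ q * lam v :=
    calc (‖T.sstar lam g u‖ * lam u) ^ q ≤ (∑' v : T.child u, ‖g v‖ * lam v) ^ q :=
          Real.rpow_le_rpow (by positivity) hnorm (by linarith)
      _ ≤ (∑' v : T.child u, lam v) ^ (q - 1) * ∑' v : T.child u, ‖g v‖ ^ q * lam v :=
          rpow_tsum_mul_le_of_finite hq (fun v => (hlam v).le) fun v => norm_nonneg _
      _ ≤ (M * lam u) ^ (q - 1) * ∑' v : T.child u, ‖g v‖ ^ q * lam v := by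
          gcongr
          exact tsum_nonneg fun v => (hlam v).le
  have hsplit : lam u ^ q = lam u * lam u ^ (q - 1) := by
    rw [← Real.rpow_one_add' hu0.le (by linarith), add_sub_cancel]
  refine le_of_mul_le_mul_right ?_ (Real.rpow_pos_of_pos hu0 (q - 1))
  calc ‖T.sstar lam g u‖ ^ q * lam u * lam u ^ (q - 1) = (‖T.sstar lam g u‖ * lam u) ^ q := by
        rw [Real.mul_rpow (norm_nonneg _) hu0.le, hsplit, mul_assoc]
    _ ≤ _ := hpow
    _ = _ := by rw [Real.mul_rpow hM hu0.le]; ring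

lemma memLp'_sstar {lam : V → ℝ} (hlam : ∀ v, 0 < lam v) {q M : ℝ} (hq : 1 ≤ q) (hM : 0 ≤ M)
    (hchild : ∀ u, ∑' v : T.child u, lam v ≤ M * lam u) {g : V → ℂ} (hg : MemLp' lam q g) :
    MemLp' lam q (T.sstar lam g) :=
  Summable.of_nonneg_of_le (fun u => mul_nonneg (Real.rpow_nonneg (norm_nonneg _) _) (hlam u).le)
    (fun u => T.norm_sstar_rpow_mul_le hlam hq hM g (hchild u))
    ((T.summable_tsum_child hg).mul_left _)

end DirTree

theorem stmt_3_general {V : Type} (T : DirTree V)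
    (lam : V → ℝ) (hlam : ∀ v : V, 0 < lam v) (p q : ℝ) (hp : 1 < p)
    (hq : q = p / (p - 1)) (hb : BoundedOn lam p T.shift) :
    ∀ g : V → ℂ, MemLp' lam q g →
      MemLp' lam q (T.sstar lam g) ∧
      ∀ f : V → ℂ, MemLp' lam p f →
        (∑' v : V, T.shift f v * g v * (lam v : ℂ)) =
          ∑' u : V, f u * T.sstar lam g u * (lam u : ℂ) := by
  intro g hg
  obtain ⟨C, hC0, hC⟩ := hb
  have hpq : p.HolderConjugate q := (Real.holderConjugate_iff_eq_conjExponent hp).2 hq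
  have hchild (u : V) : ∑' v : T.child u, lam v ≤ C ^ p * lam u :=
    T.tsum_child_le_of_pNorm_shift_single_le (fun v => (hlam v).le) hpq.pos hC0
      (hC _ (memLp'_single hpq.ne_zero u 1)).2
  refine ⟨T.memLp'_sstar hlam hpq.symm.lt.le (Real.rpow_nonneg hC0 p) hchild hg, fun f hf => ?_⟩
  have hsum := (hC f hf).1.summable_mul hpq (fun v => (hlam v).le) hg
  simp only [mul_assoc] at hsum ⊢
  rw [T.tsum_shift_mul hsum]
  exact tsum_congr fun u => by rw [T.sstar_mul_of_ne_zero lam g (hlam u).ne']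

/-- For `1 < p < ∞`, `q = p/(p-1)` and bounded shift `S` on
`L^p(T,λ)`, the adjoint of `S` under the pairing `⟨f,g⟩ = ∑ f(v) g(v) λ_v` is
the operator `(S* g)(u) = ∑_{v ∈ child u} g(v) λ_v/λ_u`, which maps `L^q(T,λ)`
to itself. -/
theorem stmt_3 {V : Type} [Countable V] [Infinite V] (T : DirTree V)
    (lam : V → ℝ) (hlam : ∀ v : V, 0 < lam v) (p q : ℝ) (hp : 1 < p)
    (hq : q = p / (p - 1)) (hb : BoundedOn lam p T.shift) :
    ∀ g : V → ℂ, MemLp' lam q g →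
      MemLp' lam q (T.sstar lam g) ∧
      ∀ f : V → ℂ, MemLp' lam p f →
        (∑' v : V, T.shift f v * g v * (lam v : ℂ)) =
          ∑' u : V, f u * T.sstar lam g u * (lam u : ℂ) :=
  stmt_3_general T lam hlam p q hp hq hb
end

section
/- Let T=(V,E) be a directed tree, let λ={λ_v}_{v∈V} be a sequence of positive real numbers, and let 1 ≤ q < ∞. If sup_{w∈V, w≠root} γ(parent(w))^{q−1} λ_{parent(w)}/λ_w < ∞, where γ(u) denotes the cardinality of child(u), then the backward shift operator B : L^q(T,λ) → L^q(T,λ) is bounded, with ‖Bf‖_q^q ≤ M ‖f‖_q^q where M is the above supremum. -/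
open Filter

attribute [local instance] Classical.propDecidable
open scoped ENNReal

namespace DirTree

variable {V : Type} (T : DirTree V)

/-- The finset of children of a vertex. -/
noncomputable def cF (u : V) : Finset V := (T.finOut u).toFinset

lemma mem_cF {u v : V} : v ∈ T.cF u ↔ T.E u v := by
  simp [cF, Set.Finite.mem_toFinset]

lemma bwd_eq_sum (f : V → ℂ) (u : V) : T.bwd f u = ∑ v ∈ T.cF u, f v := by
  rw [bwd, show T.child u = ((T.cF u : Finset V) : Set V) from (Set.Finite.coe_toFinset _).symm]
  exact Finset.tsum_subtype _ _

lemma ncard_child (u : V) : (T.child u).ncard = (T.cF u).card :=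
  Set.ncard_eq_toFinset_card _ (T.finOut u)

end DirTree

/-- If `M := sup_{w ≠ root} γ(parent w)^{q-1} λ_{parent w}/λ_w`
is finite (the supremum being taken over all edges `(u,w)`), then the backward
shift `B` is bounded on `L^q(T,λ)` with `‖Bf‖_q^q ≤ M ‖f‖_q^q`. -/
theorem stmt_6 {V : Type} [Countable V] [Infinite V] (T : DirTree V)
    (lam : V → ℝ) (hlam : ∀ v : V, 0 < lam v) (q : ℝ) (hq : 1 ≤ q)
    (hM : (⨆ e : {x : V × V // T.E x.1 x.2},
        ENNReal.ofReal (((T.child e.1.1).ncard : ℝ) ^ (q - 1) * lam e.1.1 / lam e.1.2)) ≠ ⊤) :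
    BoundedOn lam q T.bwd ∧
    ∀ f : V → ℂ, MemLp' lam q f →
      MemLp' lam q (T.bwd f) ∧
      (∑' u : V, ‖T.bwd f u‖ ^ q * lam u) ≤
        (⨆ e : {x : V × V // T.E x.1 x.2},
          ENNReal.ofReal (((T.child e.1.1).ncard : ℝ) ^ (q - 1) * lam e.1.1 / lam e.1.2)).toReal *
          ∑' v : V, ‖f v‖ ^ q * lam v := by
  set M := (⨆ e : {x : V × V // T.E x.1 x.2},
      ENNReal.ofReal (((T.child e.1.1).ncard : ℝ) ^ (q - 1) * lam e.1.1 / lam e.1.2)) with hMdef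
  set Mr := M.toReal with hMrdef
  have hq0 : (0 : ℝ) < q := lt_of_lt_of_le one_pos hq
  have hMr0 : 0 ≤ Mr := ENNReal.toReal_nonneg
  -- edge bound
  have hedge : ∀ u v : V, T.E u v → ((T.cF u).card : ℝ) ^ (q - 1) * lam u ≤ Mr * lam v := by
    intro u v h
    have h1 : ENNReal.ofReal (((T.child u).ncard : ℝ) ^ (q - 1) * lam u / lam v) ≤ M :=
      le_iSup (fun e : {x : V × V // T.E x.1 x.2} =>
        ENNReal.ofReal (((T.child e.1.1).ncard : ℝ) ^ (q - 1) * lam e.1.1 / lam e.1.2)) ⟨(u, v), h⟩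
    have h2 : ((T.child u).ncard : ℝ) ^ (q - 1) * lam u / lam v ≤ Mr :=
      (ENNReal.ofReal_le_iff_le_toReal hM).mp h1
    rw [div_le_iff₀ (hlam v)] at h2
    rw [← T.ncard_child u]
    exact h2
  -- per-vertex bound
  have hpv : ∀ (f : V → ℂ) (u : V),
      ‖T.bwd f u‖ ^ q * lam u ≤ Mr * ∑ v ∈ T.cF u, ‖f v‖ ^ q * lam v := by
    intro f u
    rcases eq_or_ne (T.cF u) ∅ with he | _
    · rw [T.bwd_eq_sum, he]
      simp [Real.zero_rpow (ne_of_gt hq0)]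
    · have h1 : ‖T.bwd f u‖ ≤ ∑ v ∈ T.cF u, ‖f v‖ := by
        rw [T.bwd_eq_sum]; exact norm_sum_le _ _
      have h2 : ‖T.bwd f u‖ ^ q ≤ (∑ v ∈ T.cF u, ‖f v‖) ^ q :=
        Real.rpow_le_rpow (norm_nonneg _) h1 hq0.le
      have h3 : (∑ v ∈ T.cF u, ‖f v‖) ^ q ≤
          ((T.cF u).card : ℝ) ^ (q - 1) * ∑ v ∈ T.cF u, ‖f v‖ ^ q :=
        Real.rpow_sum_le_const_mul_sum_rpow_of_nonneg _ hq (fun i _ => norm_nonneg _)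
      calc ‖T.bwd f u‖ ^ q * lam u
          ≤ (((T.cF u).card : ℝ) ^ (q - 1) * ∑ v ∈ T.cF u, ‖f v‖ ^ q) * lam u :=
            mul_le_mul_of_nonneg_right (h2.trans h3) (hlam u).le
        _ = ∑ v ∈ T.cF u, ‖f v‖ ^ q * (((T.cF u).card : ℝ) ^ (q - 1) * lam u) := by
            rw [← Finset.sum_mul]; ring
        _ ≤ ∑ v ∈ T.cF u, ‖f v‖ ^ q * (Mr * lam v) := by
            refine Finset.sum_le_sum fun v hv => ?_
            exact mul_le_mul_of_nonneg_left (hedge u v (T.mem_cF.mp hv))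
              (Real.rpow_nonneg (norm_nonneg _) q)
        _ = Mr * ∑ v ∈ T.cF u, ‖f v‖ ^ q * lam v := by
            rw [Finset.mul_sum]; exact Finset.sum_congr rfl fun v _ => by ring
  -- disjointness of children finsets
  have hdisj : (Set.univ : Set V).PairwiseDisjoint T.cF := by
    intro u _ u' _ h
    rw [Function.onFun, Finset.disjoint_left]
    intro v hv hv'
    exact h (T.indeg (T.mem_cF.mp hv) (T.mem_cF.mp hv'))
  -- key estimate
  have key : ∀ f : V → ℂ, MemLp' lam q f →
      MemLp' lam q (T.bwd f) ∧
      (∑' u : V, ‖T.bwd f u‖ ^ q * lam u) ≤ Mr * ∑' v : V, ‖f v‖ ^ q * lam v := by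
    intro f hf
    have ha0 : ∀ v, 0 ≤ ‖f v‖ ^ q * lam v := fun v =>
      mul_nonneg (Real.rpow_nonneg (norm_nonneg _) _) (hlam v).le
    have hsum : ∀ F : Finset V,
        ∑ u ∈ F, (∑ v ∈ T.cF u, ‖f v‖ ^ q * lam v) ≤ ∑' v, ‖f v‖ ^ q * lam v := by
      intro F
      rw [← Finset.sum_biUnion (fun u _ u' _ h => hdisj (Set.mem_univ u) (Set.mem_univ u') h)]
      exact Summable.sum_le_tsum _ (fun v _ => ha0 v) hf
    have hg0 : ∀ u, 0 ≤ ∑ v ∈ T.cF u, ‖f v‖ ^ q * lam v := fun u =>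
      Finset.sum_nonneg fun v _ => ha0 v
    have hg : Summable (fun u => ∑ v ∈ T.cF u, ‖f v‖ ^ q * lam v) :=
      summable_of_sum_le hg0 hsum
    have hgle : (∑' u, ∑ v ∈ T.cF u, ‖f v‖ ^ q * lam v) ≤ ∑' v, ‖f v‖ ^ q * lam v :=
      Summable.tsum_le_of_sum_le hg hsum
    have hB : Summable (fun u => ‖T.bwd f u‖ ^ q * lam u) := by
      refine Summable.of_nonneg_of_le
        (fun u => mul_nonneg (Real.rpow_nonneg (norm_nonneg _) _) (hlam u).le)
        (hpv f) (hg.mul_left Mr)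
    refine ⟨hB, ?_⟩
    calc (∑' u : V, ‖T.bwd f u‖ ^ q * lam u)
        ≤ ∑' u : V, Mr * ∑ v ∈ T.cF u, ‖f v‖ ^ q * lam v :=
          Summable.tsum_le_tsum (hpv f) hB (hg.mul_left Mr)
      _ = Mr * ∑' u : V, ∑ v ∈ T.cF u, ‖f v‖ ^ q * lam v := tsum_mul_left
      _ ≤ Mr * ∑' v : V, ‖f v‖ ^ q * lam v := mul_le_mul_of_nonneg_left hgle hMr0
  refine ⟨⟨Mr ^ (1 / q), Real.rpow_nonneg hMr0 _, ?_⟩, key⟩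
  intro f hf
  obtain ⟨hB, hle⟩ := key f hf
  refine ⟨hB, ?_⟩
  have h1 : 0 ≤ ∑' u : V, ‖T.bwd f u‖ ^ q * lam u :=
    tsum_nonneg fun u => mul_nonneg (Real.rpow_nonneg (norm_nonneg _) _) (hlam u).le
  have h2 : 0 ≤ ∑' v : V, ‖f v‖ ^ q * lam v :=
    tsum_nonneg fun v => mul_nonneg (Real.rpow_nonneg (norm_nonneg _) _) (hlam v).le
  calc pNorm lam q (T.bwd f)
      = (∑' u : V, ‖T.bwd f u‖ ^ q * lam u) ^ (1 / q) := rfl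
    _ ≤ (Mr * ∑' v : V, ‖f v‖ ^ q * lam v) ^ (1 / q) :=
        Real.rpow_le_rpow h1 hle (by positivity)
    _ = Mr ^ (1 / q) * (∑' v : V, ‖f v‖ ^ q * lam v) ^ (1 / q) := Real.mul_rpow hMr0 h2
    _ = Mr ^ (1 / q) * pNorm lam q f := rfl
end

section
/- Let T=(V,E) be a leafless directed tree with a root, let λ={λ_v}_{v∈V} be a sequence of positive real numbers, let 1 ≤ q < ∞, and assume the backward shift B is bounded on L^q(T,λ). If B is hypercyclic, then for each u ∈ V there exists an increasing sequence of nonnegative integers {n_k} such that Σ_{v∈child^{n_k}(u)} λ_v^{−1/q} → ∞ as k → ∞. -/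
/-!
A hypercyclic vector `f` comes arbitrarily close to every multiple of the point mass at `u`, so
`|Bⁿ f (u)|` is unbounded in `n`. On the other hand `Bⁿ f (u) = ∑_{v ∈ childⁿ(u)} f v` and
`|f v| ≤ ‖f‖ λ_v^{-1/q}`, so `|Bⁿ f (u)| ≤ ‖f‖ ∑_{v ∈ childⁿ(u)} λ_v^{-1/q}`. Hence these sums are
unbounded in `n`, and an unbounded real sequence has a subsequence tending to `∞`.
-/

open Filter

attribute [local instance] Classical.propDecidable
open scoped ENNReal

lemma Set.Finite.tsum_subtype_eq_sum {β α : Type*} [AddCommMonoid α] [TopologicalSpace α]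
    {s : Set β} (hs : s.Finite) (f : β → α) :
    ∑' v : s, f v = ∑ v ∈ hs.toFinset, f v := by
  rw [← Finset.tsum_subtype', hs.coe_toFinset]

lemma exists_strictMono_tendsto_atTop_of_not_bddAbove {u : ℕ → ℝ}
    (hu : ¬ BddAbove (Set.range u)) :
    ∃ φ : ℕ → ℕ, StrictMono φ ∧ Tendsto (u ∘ φ) atTop atTop := by
  have hfreq : ∀ k : ℕ, ∃ᶠ n in atTop, (k : ℝ) ≤ u n := by
    intro k
    by_contra h
    rw [not_frequently] at h
    exact hu (IsBoundedUnder.bddAbove_range ⟨k, h.mono fun n hn => (not_le.1 hn).le⟩)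
  obtain ⟨φ, hφ, hle⟩ := extraction_forall_of_frequently hfreq
  exact ⟨φ, hφ, tendsto_atTop_mono hle tendsto_natCast_atTop_atTop⟩

namespace DirTree

variable {V : Type} (T : DirTree V)

lemma childN_finite (n : ℕ) (u : V) : (T.childN n u).Finite := by
  induction n generalizing u with
  | zero => exact Set.finite_singleton u
  | succ n ih =>
    have h : T.childN (n + 1) u = ⋃ v ∈ T.child u, T.childN n v := by
      ext w; simp [childN]
    rw [h]
    exact (T.finOut u).biUnion fun v _ => ih v

lemma eq_of_mem_childN {n : ℕ} {v₁ v₂ w : V} (h₁ : w ∈ T.childN n v₁)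
    (h₂ : w ∈ T.childN n v₂) : v₁ = v₂ := by
  induction n generalizing v₁ v₂ w with
  | zero => exact h₁.symm.trans h₂
  | succ n ih =>
    obtain ⟨x₁, hx₁, hw₁⟩ := h₁
    obtain ⟨x₂, hx₂, hw₂⟩ := h₂
    obtain rfl := ih hw₁ hw₂
    exact T.indeg hx₁ hx₂

lemma bwd_iterate_apply (f : V → ℂ) (n : ℕ) (u : V) :
    T.bwd^[n] f u = ∑ v ∈ (T.childN_finite n u).toFinset, f v := by
  induction n generalizing u with
  | zero => simp [childN]
  | succ n ih =>
    have hfin : (T.child u).Finite := T.finOut u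
    have hdisj : Set.PairwiseDisjoint ↑hfin.toFinset
        fun v => (T.childN_finite n v).toFinset := by
      intro a _ b _ hab
      refine Finset.disjoint_left.2 fun w hwa hwb => hab ?_
      simp only [Set.Finite.mem_toFinset] at hwa hwb
      exact T.eq_of_mem_childN hwa hwb
    have hunion : (T.childN_finite (n + 1) u).toFinset
        = hfin.toFinset.biUnion fun v => (T.childN_finite n v).toFinset := by
      ext w; simp [childN]
    rw [Function.iterate_succ_apply', bwd, hfin.tsum_subtype_eq_sum, hunion,
      Finset.sum_biUnion hdisj]
    exact Finset.sum_congr rfl fun v _ => ih v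

end DirTree

section WeightedLp

variable {V : Type} {lam : V → ℝ} {q : ℝ}

lemma pNorm_nonneg (hlam : ∀ v, 0 ≤ lam v) (f : V → ℂ) : 0 ≤ pNorm lam q f :=
  Real.rpow_nonneg (tsum_nonneg fun v => mul_nonneg (by positivity) (hlam v)) _

lemma memLp'_single_s11 (hq : q ≠ 0) (u : V) (c : ℂ) : MemLp' lam q (Pi.single u c) := by
  refine summable_of_ne_finset_zero (s := {u}) fun v hv => ?_
  rw [Finset.mem_singleton] at hv
  simp [hv, Real.zero_rpow hq]

lemma norm_le_pNorm_mul_rpow (hlam : ∀ v, 0 < lam v) (hq : 0 < q) {f : V → ℂ}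
    (hf : MemLp' lam q f) (v : V) : ‖f v‖ ≤ pNorm lam q f * lam v ^ (-(1 / q)) := by
  set S := ∑' w, ‖f w‖ ^ q * lam w
  have hterm : ‖f v‖ ^ q ≤ S * (lam v)⁻¹ := by
    rw [← div_eq_mul_inv, le_div_iff₀ (hlam v)]
    exact hf.le_tsum v fun w _ => mul_nonneg (by positivity) (hlam w).le
  calc ‖f v‖ = (‖f v‖ ^ q) ^ (1 / q) := by
        rw [one_div, Real.rpow_rpow_inv (norm_nonneg _) hq.ne']
    _ ≤ (S * (lam v)⁻¹) ^ (1 / q) := by gcongr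
    _ = pNorm lam q f * lam v ^ (-(1 / q)) := by
        rw [Real.mul_rpow (tsum_nonneg fun w => mul_nonneg (by positivity) (hlam w).le)
          (inv_nonneg.2 (hlam v).le), Real.inv_rpow (hlam v).le, ← Real.rpow_neg (hlam v).le]
        rfl

end WeightedLp

namespace DirTree

variable {V : Type} (T : DirTree V) {lam : V → ℝ} {q : ℝ}

lemma norm_bwd_iterate_apply_le (hlam : ∀ v, 0 < lam v) (hq : 0 < q) {f : V → ℂ}
    (hf : MemLp' lam q f) (n : ℕ) (u : V) :
    ‖T.bwd^[n] f u‖ ≤ pNorm lam q f * ∑' v : T.childN n u, lam v.1 ^ (-(1 / q)) := by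
  rw [T.bwd_iterate_apply, (T.childN_finite n u).tsum_subtype_eq_sum fun v => lam v ^ (-(1 / q)),
    Finset.mul_sum]
  exact (norm_sum_le _ _).trans
    (Finset.sum_le_sum fun v _ => norm_le_pNorm_mul_rpow hlam hq hf v)

lemma not_bddAbove_tsum_childN_rpow (hlam : ∀ v, 0 < lam v) (hq : 0 < q)
    (hhc : Hypercyclic lam q T.bwd) (u : V) :
    ¬ BddAbove (Set.range fun n => ∑' v : T.childN n u, lam v.1 ^ (-(1 / q))) := by
  rintro ⟨M, hM⟩
  obtain ⟨f, hf, hdense⟩ := hhc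
  set δ := lam u ^ (-(1 / q))
  -- `Bⁿ f (u)` within `δ` of `c` forces `‖Bⁿ f (u)‖ > ‖f‖ M`, against the bound through `M`.
  set c := |pNorm lam q f * M| + δ
  have hδ : 0 < δ := Real.rpow_pos_of_pos (hlam u) _
  obtain ⟨n, hmem, hnorm⟩ :=
    hdense (Pi.single u (c : ℂ)) (memLp'_single_s11 hq.ne' u _) 1 one_pos
  have hclose : ‖T.bwd^[n] f u - c‖ < δ := by
    have h := norm_le_pNorm_mul_rpow hlam hq hmem u
    rw [Pi.sub_apply, Pi.single_eq_same] at h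
    exact h.trans_lt (mul_lt_of_lt_one_left hδ hnorm)
  have hsmall : ‖T.bwd^[n] f u‖ ≤ pNorm lam q f * M :=
    (T.norm_bwd_iterate_apply_le hlam hq hf n u).trans
      (mul_le_mul_of_nonneg_left (hM ⟨n, rfl⟩) (pNorm_nonneg (fun v => (hlam v).le) f))
  have hc : ‖(c : ℂ)‖ = c := by
    rw [Complex.norm_real, Real.norm_of_nonneg (by positivity)]
  have hreverse := norm_sub_norm_le (c : ℂ) (T.bwd^[n] f u)
  rw [norm_sub_rev, hc] at hreverse
  linarith [le_abs_self (pNorm lam q f * M)]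

end DirTree

theorem stmt_11_general {V : Type} (T : DirTree V)
    (lam : V → ℝ) (hlam : ∀ v : V, 0 < lam v) (q : ℝ) (hq : 1 ≤ q)
    (hhc : Hypercyclic lam q T.bwd) :
    ∀ u : V, ∃ nk : ℕ → ℕ, StrictMono nk ∧
      Tendsto (fun k : ℕ => ∑' v : T.childN (nk k) u, (lam v.1) ^ (-(1 / q)))
        atTop atTop := fun u =>
  exists_strictMono_tendsto_atTop_of_not_bddAbove
    (T.not_bddAbove_tsum_childN_rpow hlam (by linarith) hhc u)

/-- For a leafless rooted directed tree with bounded backward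
shift `B` on `L^q(T,λ)`: if `B` is hypercyclic, then for each vertex `u` there
is a strictly increasing sequence `n_k` with
`∑_{v ∈ childⁿᵏ(u)} λ_v^{-1/q} → ∞`. -/
theorem stmt_11 {V : Type} [Countable V] [Infinite V] (T : DirTree V)
    (hleafless : ∀ u : V, ¬ T.IsLeaf u) (hroot : ∃ r : V, T.IsRoot r)
    (lam : V → ℝ) (hlam : ∀ v : V, 0 < lam v) (q : ℝ) (hq : 1 ≤ q)
    (hb : BoundedOn lam q T.bwd)
    (hhc : Hypercyclic lam q T.bwd) :
    ∀ u : V, ∃ nk : ℕ → ℕ, StrictMono nk ∧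
      Tendsto (fun k : ℕ => ∑' v : T.childN (nk k) u, (lam v.1) ^ (-(1 / q)))
        atTop atTop :=
  stmt_11_general T lam hlam q hq hhc
end

section
/- Let T=(V,E) be a leafless directed tree with a root, let 1 < q < ∞, let λ be the constant sequence λ_v = 1 for each v ∈ V, and assume the backward shift B is bounded on L^q(T,λ). If the tree T has a free end, then B is not hypercyclic. -/
open Filter

attribute [local instance] Classical.propDecidable
open scoped ENNReal

namespace DirTree

variable {V : Type} (T : DirTree V)

/-- The unique child of a vertex (junk value if the child is not unique). -/
noncomputable def uc (u : V) : V :=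
  if h : ∃ a, T.child u = {a} then h.choose else u

lemma uc_spec {u : V} (h : (T.child u).ncard = 1) : T.child u = {T.uc u} := by
  obtain ⟨a, ha⟩ := Set.ncard_eq_one.mp h
  have hex : ∃ a, T.child u = {a} := ⟨a, ha⟩
  simp only [uc, dif_pos hex]
  exact hex.choose_spec

lemma childN_sub {w w' : V} (hw' : w' ∈ T.child w) (n : ℕ) :
    T.childN n w' ⊆ T.childN (n + 1) w := fun x hx => ⟨w', hw', hx⟩

/-- Every descendant (including itself) has exactly one child. -/
def Prop1 (u : V) : Prop := ∀ n : ℕ, ∀ v ∈ T.childN n u, (T.child v).ncard = 1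

lemma prop1_self {u : V} (h : T.Prop1 u) : (T.child u).ncard = 1 := h 0 u rfl

lemma uc_mem {u : V} (h : T.Prop1 u) : T.uc u ∈ T.child u := by
  rw [T.uc_spec (T.prop1_self h)]; rfl

lemma prop1_uc {u : V} (h : T.Prop1 u) : T.Prop1 (T.uc u) := by
  intro n v hv
  exact h (n + 1) v (T.childN_sub (T.uc_mem h) n hv)

lemma childN_succ_eq {u : V} (h : T.Prop1 u) (n : ℕ) :
    T.childN (n + 1) u = T.childN n (T.uc u) := by
  have h1 : T.child u = {T.uc u} := T.uc_spec (T.prop1_self h)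
  ext x
  constructor
  · rintro ⟨v, hv, hx⟩
    rw [h1, Set.mem_singleton_iff] at hv
    rwa [hv] at hx
  · intro hx
    exact ⟨T.uc u, T.uc_mem h, hx⟩

lemma bwd_iter (n : ℕ) : ∀ u : V, T.Prop1 u → ∀ f : V → ℂ,
    T.bwd^[n] f u = f (T.uc^[n] u) := by
  induction n with
  | zero => intro u _ f; rfl
  | succ n ih =>
    intro u hu f
    have h1 : T.child u = {T.uc u} := T.uc_spec (T.prop1_self hu)
    rw [Function.iterate_succ_apply']
    show T.bwd (T.bwd^[n] f) u = _
    rw [bwd, h1, tsum_singleton, ih (T.uc u) (T.prop1_uc hu) f,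
      Function.iterate_succ_apply]

end DirTree

lemma ptwise {V : Type} (q : ℝ) (hq : 0 < q) (h : V → ℂ)
    (hh : MemLp' (fun _ : V => (1 : ℝ)) q h) (v : V) :
    ‖h v‖ ≤ pNorm (fun _ : V => (1 : ℝ)) q h := by
  have h1 : ‖h v‖ ^ q * 1 ≤ ∑' u, ‖h u‖ ^ q * 1 :=
    Summable.le_tsum hh v (fun u _ => by positivity)
  have h2 : ‖h v‖ = (‖h v‖ ^ q) ^ (1 / q) := by
    rw [← Real.rpow_mul (norm_nonneg _), mul_one_div_cancel hq.ne', Real.rpow_one]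
  rw [h2, pNorm]
  exact Real.rpow_le_rpow (by positivity) (by simpa using h1) (by positivity)


/-- For a leafless rooted directed tree, `1 < q < ∞`, constant
weights `λ_v = 1`, and bounded backward shift `B` on `L^q`: if the tree has a
free end, then `B` is not hypercyclic. -/
theorem stmt_12 {V : Type} [Countable V] [Infinite V] (T : DirTree V)
    (hleafless : ∀ u : V, ¬ T.IsLeaf u) (hroot : ∃ r : V, T.IsRoot r)
    (q : ℝ) (hq : 1 < q)
    (hb : BoundedOn (fun _ : V => (1 : ℝ)) q T.bwd)
    (hfe : T.FreeEnd) :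
    ¬ Hypercyclic (fun _ : V => (1 : ℝ)) q T.bwd := by
  intro hhc
  have hq0 : (0 : ℝ) < q := lt_trans one_pos hq
  obtain ⟨w, hfeP⟩ := hfe
  obtain ⟨w', hw'⟩ := not_not.mp (hleafless w)
  have hP : T.Prop1 w' := by
    intro n v hv
    exact hfeP (n + 1) (Nat.succ_pos n) v (T.childN_sub hw' n hv)
  obtain ⟨f, hf, hdense⟩ := hhc
  set M := pNorm (fun _ : V => (1 : ℝ)) q f with hM
  have hMnn : 0 ≤ M := Real.rpow_nonneg (tsum_nonneg fun v => by positivity) _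
  set g : V → ℂ := fun v => if v = w' then ((M + 2 : ℝ) : ℂ) else 0 with hg
  have hgmem : MemLp' (fun _ : V => (1 : ℝ)) q g := by
    apply summable_of_ne_finset_zero (s := {w'})
    intro v hv
    simp only [Finset.mem_singleton] at hv
    simp [g, hv, Real.zero_rpow hq0.ne']
  obtain ⟨n, hmem, hlt⟩ := hdense g hgmem 1 one_pos
  have hpt := ptwise q hq0 _ hmem w'
  have hval : (T.bwd^[n] f - g) w' = f (T.uc^[n] w') - ((M + 2 : ℝ) : ℂ) := by
    simp [Pi.sub_apply, T.bwd_iter n w' hP f, g]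
  rw [hval] at hpt
  have hfr : ‖f (T.uc^[n] w')‖ ≤ M := ptwise q hq0 f hf _
  have hnc : ‖((M + 2 : ℝ) : ℂ)‖ = M + 2 := by
    rw [Complex.norm_real, Real.norm_of_nonneg (by linarith)]
  have htri : ‖((M + 2 : ℝ) : ℂ)‖ - ‖f (T.uc^[n] w')‖
      ≤ ‖f (T.uc^[n] w') - ((M + 2 : ℝ) : ℂ)‖ := by
    rw [norm_sub_rev]
    exact norm_sub_norm_le _ _
  linarith
end
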